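/- arXiv:1210.3056 — 4 statements merged into one kernel-verified Lean document; each statement's English description precedes it below -/
import Mathlib

section
/- Let 𝔤 be a finite-dimensional simple real Lie algebra equipped with an ad-invariant inner product ⟨·,·⟩. Then every alternating trilinear form T : 𝔤 × 𝔤 × 𝔤 → ℝ with the property that for every X ∈ 𝔤 there exists V ∈ 𝔤 with T(X,Y,Z) = ⟨[V,Y],Z⟩ for all Y,Z ∈ 𝔤, is a real multiple of the Cartan 3-form: there exists c ∈ ℝ with T(X,Y,Z) = c·⟨[X,Y],Z⟩ for all X,Y,Z ∈ 𝔤. -/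
/-!
Nondegeneracy of the form and triviality of the centre make `V` depend linearly on `X`, so
`T(X,Y,Z) = ⟨[AX,Y],Z⟩` for an endomorphism `A`, and alternation of `T` in `X, Y` says
`[AX,Y] = [X,AY]`. For the defect `d(u,v) = A[u,v] - [Au,v]`, the 4-form `⟨[d(u,v),y],z⟩` is
alternating yet odd under exchanging the pairs `(u,v)` and `(y,z)`, hence zero; so `A` commutes
with every `ad x`. As `L` is perfect, `A` is then self-adjoint for `⟨·,·⟩` and has a real
eigenvalue `c`, whose eigenspace is a nonzero ideal, hence all of `L`.
-/

open LieAlgebra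

theorem LinearMap.exists_comp_eq_of_forall_exists_eq {K U V W : Type*} [DivisionRing K]
    [AddCommGroup U] [Module K U] [AddCommGroup V] [Module K V] [AddCommGroup W] [Module K W]
    {Φ : V →ₗ[K] W} (hΦ : Function.Injective Φ) {f : U →ₗ[K] W} (h : ∀ x, ∃ v, Φ v = f x) :
    ∃ A : U →ₗ[K] V, Φ ∘ₗ A = f := by
  obtain ⟨Ψ, hΨ⟩ := Φ.exists_leftInverse_of_injective (LinearMap.ker_eq_bot.mpr hΦ)
  refine ⟨Ψ ∘ₗ f, LinearMap.ext fun x => ?_⟩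
  obtain ⟨v, hv⟩ := h x
  rw [LinearMap.comp_apply, LinearMap.comp_apply, ← hv, ← LinearMap.comp_apply Ψ, hΨ,
    LinearMap.id_apply]

theorem eq_zero_of_antisymm_of_swap_pairs {α K : Type*} [CommRing K] [IsDomain K]
    [CharZero K] {g : α → α → α → α → K}
    (h₁₂ : ∀ a b c d, g b a c d = -g a b c d) (h₂₃ : ∀ a b c d, g a c b d = -g a b c d)
    (h₃₄ : ∀ a b c d, g a b d c = -g a b c d) (hpair : ∀ a b c d, g c d a b = -g a b c d)
    (a b c d : α) : g a b c d = 0 := by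
  -- exchanging the two pairs is an even permutation, so it must also preserve `g`
  have h : g a b c d + g a b c d = 0 := by
    linear_combination h₂₃ a b c d - h₁₂ a c b d + h₃₄ c a b d - h₂₃ c a d b + hpair a b c d
  exact add_self_eq_zero.mp h

theorem LinearMap.BilinForm.separatingLeft_of_pos {R M : Type*} [CommSemiring R]
    [PartialOrder R] [AddCommMonoid M] [Module R M] {B : LinearMap.BilinForm R M}
    (hB : ∀ x, x ≠ 0 → 0 < B x x) : B.SeparatingLeft :=
  fun x hx => by_contra fun h => (hB x h).ne' (hx x)

theorem Module.End.exists_hasEigenvalue_of_isSelfAdjoint {V : Type*} [AddCommGroup V]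
    [Module ℝ V] [FiniteDimensional ℝ V] [Nontrivial V] {B : LinearMap.BilinForm ℝ V}
    (hBs : B.IsSymm) (hBpos : ∀ x, x ≠ 0 → 0 < B x x) {A : Module.End ℝ V}
    (hA : LinearMap.IsSelfAdjoint B A) : ∃ μ, A.HasEigenvalue μ := by
  let core : InnerProductSpace.Core ℝ V :=
  { inner := fun x y => B x y
    conj_inner_symm := fun x y => hBs.eq y x
    re_inner_nonneg := fun x => by
      rcases eq_or_ne x 0 with rfl | h
      · simp
      · exact (hBpos x h).le
    definite := fun x hx => by_contra fun h => (hBpos x h).ne' hx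
    add_left := fun x y z => by simp
    smul_left := fun x y r => by simp }
  let _ : NormedAddCommGroup V := core.toNormedAddCommGroup
  let _ : InnerProductSpace ℝ V := InnerProductSpace.ofCore core.toCore
  exact ⟨_, LinearMap.IsSymmetric.hasEigenvalue_iSup_of_finiteDimensional (T := A) hA⟩

theorem LinearMap.BilinForm.lieInvariant.apply_lie_eq {R L : Type*} [CommRing R] [LieRing L]
    [LieAlgebra R L] {B : LinearMap.BilinForm R L} (hB : B.lieInvariant L) (x y z : L) :
    B ⁅x, y⁆ z = B x ⁅y, z⁆ := by
  rw [← lie_skew, map_neg, LinearMap.neg_apply, hB, neg_neg]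

theorem LieAlgebra.IsSimple.span_lie_eq_top {R L : Type*} [CommRing R] [LieRing L]
    [LieAlgebra R L] [IsSimple R L] :
    Submodule.span R {⁅x, y⁆ | (x : L) (y : L)} = ⊤ := by
  have h : ⁅(⊤ : LieIdeal R L), (⊤ : LieIdeal R L)⁆ = ⊤ := by
    refine (IsSimple.eq_bot_or_eq_top _).resolve_left fun h => IsSimple.non_abelian R (L := L) ?_
    exact ⟨fun x y => (LieSubmodule.lie_eq_bot_iff _ _).mp h x trivial y trivial⟩
  simpa [h] using (LieSubmodule.lieIdeal_oper_eq_linear_span' (R := R) (L := L) (M := L) ⊤ ⊤).symm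

theorem LieAlgebra.IsSimple.eq_smul_of_hasEigenvalue {K L : Type*} [Field K] [LieRing L]
    [LieAlgebra K L] [IsSimple K L] {A : Module.End K L}
    (hA : ∀ x y : L, A ⁅x, y⁆ = ⁅x, A y⁆) {μ : K} (hμ : A.HasEigenvalue μ) (x : L) :
    A x = μ • x := by
  let E : LieIdeal K L :=
  { Module.End.eigenspace A μ with
    lie_mem := fun {y m} hm => by
      simp only [AddSubsemigroup.mem_carrier, AddSubmonoid.mem_toSubsemigroup,
        Submodule.mem_toAddSubmonoid, Module.End.mem_eigenspace_iff] at hm ⊢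
      rw [hA, hm, lie_smul] }
  obtain ⟨v, hv⟩ := hμ.exists_hasEigenvector
  have hvE : v ∈ E := hv.1
  have hE : E = ⊤ := (IsSimple.eq_bot_or_eq_top E).resolve_left fun h =>
    hv.2 ((LieSubmodule.mem_bot v).mp (h ▸ hvE))
  have hxE : x ∈ E := hE ▸ LieSubmodule.mem_top x
  exact Module.End.mem_eigenspace_iff.mp hxE

section BracketDefect

variable {R L : Type*} [CommRing R] [LieRing L] [LieAlgebra R L]

def bracketDefect (A : Module.End R L) (u v : L) : L := A ⁅u, v⁆ - ⁅A u, v⁆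

variable {A : Module.End R L} (hA : ∀ x y : L, ⁅A x, y⁆ = ⁅x, A y⁆)
include hA

theorem bracketDefect_swap (u v : L) : bracketDefect A v u = -bracketDefect A u v := by
  rw [bracketDefect, bracketDefect, ← lie_skew u v, map_neg, hA v u, ← lie_skew (A u) v]
  abel

theorem bracketDefect_lie (x y z : L) :
    ⁅bracketDefect A x y, z⁆ = -⁅x, bracketDefect A y z⁆ := by
  rw [bracketDefect, bracketDefect, sub_lie, lie_sub, hA ⁅x, y⁆ z, lie_lie, ← hA y z, ← hA x z,
    lie_lie (A x) y z, hA x ⁅y, z⁆]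
  abel

variable {B : LinearMap.BilinForm R L} (hBi : B.lieInvariant L)
include hBi

theorem apply_lie_apply_left (u v w : L) : B ⁅A u, v⁆ w = B ⁅u, v⁆ (A w) := by
  rw [hBi, hBi, hA]

theorem apply_bracketDefect_lie (u v y z : L) :
    B ⁅bracketDefect A u v, y⁆ z = B (A ⁅u, v⁆) ⁅y, z⁆ - B ⁅u, v⁆ (A ⁅y, z⁆) := by
  rw [hBi.apply_lie_eq, bracketDefect, map_sub, LinearMap.sub_apply,
    apply_lie_apply_left hA hBi]

theorem bracketDefect_eq_zero [LieModule.IsFaithful R L L] [IsDomain R] [CharZero R]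
    (hBs : B.IsSymm) (hBnd : B.SeparatingLeft) (u v : L) : bracketDefect A u v = 0 := by
  have h₁₂ (u v y z : L) :
      B ⁅bracketDefect A v u, y⁆ z = -B ⁅bracketDefect A u v, y⁆ z := by
    rw [bracketDefect_swap hA, neg_lie, map_neg, LinearMap.neg_apply]
  have h₂₃ (u v y z : L) :
      B ⁅bracketDefect A u y, v⁆ z = -B ⁅bracketDefect A u v, y⁆ z := by
    rw [bracketDefect_lie hA, bracketDefect_lie hA, bracketDefect_swap hA, lie_neg, neg_neg,
      map_neg, LinearMap.neg_apply, neg_neg]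
  have h₃₄ (u v y z : L) :
      B ⁅bracketDefect A u v, z⁆ y = -B ⁅bracketDefect A u v, y⁆ z := by
    rw [hBi, hBs.eq]
  have hpair (u v y z : L) :
      B ⁅bracketDefect A y z, u⁆ v = -B ⁅bracketDefect A u v, y⁆ z := by
    rw [apply_bracketDefect_lie hA hBi, apply_bracketDefect_lie hA hBi, hBs.eq (A ⁅y, z⁆),
      hBs.eq ⁅y, z⁆]
    ring
  refine (LieModule.isFaithful_iff' R L L).mp inferInstance _ fun y => hBnd _ fun z => ?_
  exact eq_zero_of_antisymm_of_swap_pairs (g := fun u v y z => B ⁅bracketDefect A u v, y⁆ z)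
    h₁₂ h₂₃ h₃₄ hpair u v y z

theorem apply_lie_eq_lie_apply [LieModule.IsFaithful R L L] [IsDomain R] [CharZero R]
    (hBs : B.IsSymm) (hBnd : B.SeparatingLeft) (x y : L) : A ⁅x, y⁆ = ⁅A x, y⁆ :=
  sub_eq_zero.mp (bracketDefect_eq_zero hA hBi hBs hBnd x y)

end BracketDefect

theorem isSelfAdjoint_of_lie_apply_eq {R L : Type*} [CommRing R] [IsDomain R] [CharZero R]
    [LieRing L] [LieAlgebra R L] [IsSimple R L] {A : Module.End R L}
    {B : LinearMap.BilinForm R L} (hA : ∀ x y : L, ⁅A x, y⁆ = ⁅x, A y⁆)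
    (hBi : B.lieInvariant L) (hBs : B.IsSymm) (hBnd : B.SeparatingLeft) :
    LinearMap.IsSelfAdjoint B A := by
  refine LinearMap.isAdjointPair_iff_comp_eq_compl₂.mpr
    (LinearMap.ext_on IsSimple.span_lie_eq_top ?_)
  rintro - ⟨x, y, rfl⟩
  ext z
  simp only [LinearMap.comp_apply, LinearMap.compl₂_apply]
  rw [apply_lie_eq_lie_apply hA hBi hBs hBnd, apply_lie_apply_left hA hBi]

theorem LieAlgebra.IsSimple.exists_eq_smul_of_lie_apply_eq {L : Type*} [LieRing L]
    [LieAlgebra ℝ L] [FiniteDimensional ℝ L] [IsSimple ℝ L] {B : LinearMap.BilinForm ℝ L}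
    (hBs : B.IsSymm) (hBpos : ∀ x, x ≠ 0 → 0 < B x x) (hBi : B.lieInvariant L)
    {A : Module.End ℝ L} (hA : ∀ x y : L, ⁅A x, y⁆ = ⁅x, A y⁆) :
    ∃ c : ℝ, ∀ x, A x = c • x := by
  have hBnd := LinearMap.BilinForm.separatingLeft_of_pos hBpos
  have := IsSimple.nontrivial ℝ L
  obtain ⟨μ, hμ⟩ := Module.End.exists_hasEigenvalue_of_isSelfAdjoint hBs hBpos
    (isSelfAdjoint_of_lie_apply_eq hA hBi hBs hBnd)
  refine ⟨μ, IsSimple.eq_smul_of_hasEigenvalue (fun x y => ?_) hμ⟩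
  rw [apply_lie_eq_lie_apply hA hBi hBs hBnd, hA]

theorem exists_linearMap_apply_eq_of_forall_exists {K L : Type*} [Field K] [LieRing L]
    [LieAlgebra K L] [LieModule.IsFaithful K L L] {B : LinearMap.BilinForm K L}
    (hBnd : B.SeparatingLeft) (T : MultilinearMap K (fun _ : Fin 3 => L) K)
    (hT : ∀ X, ∃ V : L, ∀ Y Z, T ![X, Y, Z] = B ⁅V, Y⁆ Z) :
    ∃ A : Module.End K L, ∀ X Y Z, T ![X, Y, Z] = B ⁅A X, Y⁆ Z := by
  let Φ : L →ₗ[K] L → L → K :=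
    { toFun := fun V Y Z => B ⁅V, Y⁆ Z
      map_add' := fun V W => by ext; simp [add_lie]
      map_smul' := fun c V => by ext; simp [smul_lie] }
  let f : L →ₗ[K] L → L → K :=
    { toFun := fun X Y Z => T ![X, Y, Z]
      map_add' := fun X X' => funext₂ fun Y Z => T.cons_add ![Y, Z] X X'
      map_smul' := fun c X => funext₂ fun Y Z => T.cons_smul ![Y, Z] c X }
  have hΦ : Function.Injective Φ := (injective_iff_map_eq_zero Φ).mpr fun V hV =>
    (LieModule.isFaithful_iff' K L L).mp inferInstance V fun Y =>
      hBnd _ fun Z => congrFun (congrFun hV Y) Z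
  obtain ⟨A, hA⟩ := LinearMap.exists_comp_eq_of_forall_exists_eq hΦ (f := f) fun X =>
    (hT X).imp fun V hV => funext₂ fun Y Z => (hV Y Z).symm
  exact ⟨A, fun X Y Z => (congrFun (congrFun (LinearMap.congr_fun hA X) Y) Z).symm⟩

theorem lie_apply_eq_of_alternatingMap_eq {K L : Type*} [CommRing K] [LieRing L]
    [LieAlgebra K L] {B : LinearMap.BilinForm K L} (hBnd : B.SeparatingLeft)
    {T : L [⋀^Fin 3]→ₗ[K] K} {A : Module.End K L}
    (hTA : ∀ X Y Z, T ![X, Y, Z] = B ⁅A X, Y⁆ Z) (X Y : L) : ⁅A X, Y⁆ = ⁅X, A Y⁆ := by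
  have hswap (Z : L) : T ![Y, X, Z] = -T ![X, Y, Z] := by
    have h := T.map_swap ![X, Y, Z] (i := 0) (j := 1) (by decide)
    have hv : ![X, Y, Z] ∘ Equiv.swap 0 1 = ![Y, X, Z] := by
      ext i; fin_cases i <;> simp [Equiv.swap_apply_def]
    rwa [hv] at h
  rw [← sub_eq_zero]
  refine hBnd _ fun Z => ?_
  rw [map_sub, LinearMap.sub_apply, ← hTA, ← lie_skew, map_neg, LinearMap.neg_apply, ← hTA,
    hswap, sub_neg_eq_add, add_neg_cancel]

/-- On a finite-dimensional simple real Lie algebra with an ad-invariant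
inner product `B`, every alternating trilinear form `T` such that each contraction
`T(X,·,·)` is of the form `B([V,·],·)` for some `V` is a multiple of the Cartan 3-form. -/
theorem simple_lie_skew_holonomy (L : Type) [LieRing L] [LieAlgebra ℝ L]
    [FiniteDimensional ℝ L] [LieAlgebra.IsSimple ℝ L]
    (B : L →ₗ[ℝ] L →ₗ[ℝ] ℝ)
    (hBsymm : ∀ X Y : L, B X Y = B Y X)
    (hBpos : ∀ X : L, X ≠ 0 → 0 < B X X)
    (hBinv : ∀ X Y Z : L, B ⁅X, Y⁆ Z + B Y ⁅X, Z⁆ = 0)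
    (T : L [⋀^Fin 3]→ₗ[ℝ] ℝ)
    (hT : ∀ X : L, ∃ V : L, ∀ Y Z : L, T ![X, Y, Z] = B ⁅V, Y⁆ Z) :
    ∃ c : ℝ, ∀ X Y Z : L, T ![X, Y, Z] = c * B ⁅X, Y⁆ Z := by
  have hBi : LinearMap.BilinForm.lieInvariant L B := fun X Y Z =>
    eq_neg_of_add_eq_zero_left (hBinv X Y Z)
  have hBnd := LinearMap.BilinForm.separatingLeft_of_pos hBpos
  obtain ⟨A, hTA⟩ : ∃ A : Module.End ℝ L, ∀ X Y Z, T ![X, Y, Z] = B ⁅A X, Y⁆ Z :=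
    exists_linearMap_apply_eq_of_forall_exists hBnd T.toMultilinearMap hT
  obtain ⟨c, hc⟩ := IsSimple.exists_eq_smul_of_lie_apply_eq ⟨hBsymm⟩ hBpos hBi
    (lie_apply_eq_of_alternatingMap_eq hBnd hTA)
  refine ⟨c, fun X Y Z => ?_⟩
  rw [hTA, hc, smul_lie, map_smul, LinearMap.smul_apply, smul_eq_mul]
end

section
/- Let 𝔤 be a finite-dimensional real Lie algebra with an ad-invariant inner product ⟨·,·⟩, and suppose 𝔤 is the internal direct sum 𝔤 = 𝔷 ⊕ 𝔤₁ ⊕ … ⊕ 𝔤_q, where 𝔷 is the center of 𝔤 and each 𝔤ᵢ is a simple ideal; let πᵢ : 𝔤 → 𝔤ᵢ denote the corresponding projections. Then an alternating trilinear form T : 𝔤 × 𝔤 × 𝔤 → ℝ satisfies 'for every X ∈ 𝔤 there exists V ∈ 𝔤 with T(X,Y,Z) = ⟨[V,Y],Z⟩ for all Y,Z ∈ 𝔤' if and only if there exist real numbers α₁,…,α_q such that T(X,Y,Z) = Σᵢ₌₁^q αᵢ·⟨[πᵢ(X), πᵢ(Y)], πᵢ(Z)⟩ for all X,Y,Z ∈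 𝔤. -/
/-!
The vector `V` can be chosen to depend linearly on `X`, and the alternation of `T` then gives
`[V X, Y] = [X, V Y]`. On a simple Lie algebra with a positive definite invariant form every such
map is a scalar: invariance puts it in the centroid (`D [x, y] = [D x, y]`) and makes it
`B`-symmetric, so it has a real eigenvalue, whose eigenspace is a nonzero ideal. Applied to
`πᵢ ∘ V` on the simple ideals this gives `πᵢ (V X) = αᵢ πᵢ X`, so `V` agrees with `Σ αᵢ πᵢ` up to
the center, which does not affect `[V X, Y]`. Conversely `V = Σ αᵢ πᵢ` works.
-/

open LieAlgebra Module.End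

theorem LinearMap.exists_comp_eq_of_forall_exists {R M N P : Type*} [Ring R] [AddCommGroup M]
    [Module R M] [AddCommGroup N] [Module R N] [AddCommGroup P] [Module R P]
    [Module.Projective R M] (f : M →ₗ[R] N) (g : P →ₗ[R] N) (h : ∀ x, ∃ y, g y = f x) :
    ∃ l : M →ₗ[R] P, g ∘ₗ l = f := by
  obtain ⟨l, hl⟩ := Module.projective_lifting_property g.rangeRestrict
    (f.codRestrict (LinearMap.range g) h) g.surjective_rangeRestrict
  exact ⟨l, LinearMap.ext fun x => congrArg Subtype.val (LinearMap.congr_fun hl x)⟩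

theorem LinearMap.separatingLeft_of_forall_pos {M : Type*} [AddCommGroup M] [Module ℝ M]
    {B : M →ₗ[ℝ] M →ₗ[ℝ] ℝ} (hBpos : ∀ x, x ≠ 0 → 0 < B x x) : B.SeparatingLeft :=
  fun x hx => by_contra fun h => (hBpos x h).ne' (hx x)

theorem exists_hasEigenvalue_of_isAdjointPair_self {M : Type*} [AddCommGroup M] [Module ℝ M]
    [FiniteDimensional ℝ M] [Nontrivial M] {B : M →ₗ[ℝ] M →ₗ[ℝ] ℝ}
    (hBsymm : ∀ x y, B x y = B y x) (hBpos : ∀ x, x ≠ 0 → 0 < B x x)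
    {D : M →ₗ[ℝ] M} (hD : B.IsAdjointPair B D D) : ∃ a, HasEigenvalue D a := by
  let core : InnerProductSpace.Core ℝ M :=
    { inner := fun x y => B x y
      conj_inner_symm := fun x y => hBsymm y x
      re_inner_nonneg := fun x => by
        rcases eq_or_ne x 0 with rfl | hx
        · simp
        · exact (hBpos x hx).le
      add_left := fun x y z => by simp
      smul_left := fun x y r => by simp
      definite := fun x hx => by_contra fun h => (hBpos x h).ne' hx }
  let := core.toNormedAddCommGroup
  let := InnerProductSpace.ofCore core.toCore
  exact ⟨_, LinearMap.IsSymmetric.hasEigenvalue_iSup_of_finiteDimensional (T := D) hD⟩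

section TrilinearForm

variable {K L : Type*} [CommRing K] [LieRing L] [LieAlgebra K L] {T : L [⋀^Fin 3]→ₗ[K] K}
  {B : L →ₗ[K] L →ₗ[K] K}

theorem exists_linearMap_apply_eq_lie [Module.Projective K L]
    (h : ∀ X : L, ∃ V : L, ∀ Y Z : L, T ![X, Y, Z] = B ⁅V, Y⁆ Z) :
    ∃ V : L →ₗ[K] L, ∀ X Y Z : L, T ![X, Y, Z] = B ⁅V X, Y⁆ Z := by
  let contract : L →ₗ[K] L → L → K :=
    { toFun := fun X Y Z => T.curryLeft X ![Y, Z]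
      map_add' := fun X X' => by ext; simp
      map_smul' := fun c X => by ext; simp }
  let lieForm : L →ₗ[K] L → L → K :=
    { toFun := fun V Y Z => B ⁅V, Y⁆ Z
      map_add' := fun V V' => by ext; simp [add_lie]
      map_smul' := fun c V => by ext; simp [smul_lie] }
  obtain ⟨V, hV⟩ := LinearMap.exists_comp_eq_of_forall_exists contract lieForm
    fun X => (h X).imp fun V hV => funext₂ fun Y Z => (hV Y Z).symm
  exact ⟨V, fun X Y Z => (congrFun₂ (LinearMap.congr_fun hV X) Y Z).symm⟩

theorem lie_map_eq_of_alternating (hB : B.SeparatingLeft) {V : L →ₗ[K] L}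
    (hV : ∀ X Y Z : L, T ![X, Y, Z] = B ⁅V X, Y⁆ Z) (X Y : L) : ⁅V X, Y⁆ = ⁅X, V Y⁆ := by
  refine sub_eq_zero.mp (hB _ fun Z => ?_)
  have hswap : ![X, Y, Z] ∘ Equiv.swap 0 1 = ![Y, X, Z] := by
    funext k; fin_cases k <;> rfl
  have h := T.map_swap ![X, Y, Z] (zero_ne_one : (0 : Fin 3) ≠ 1)
  rw [hswap, hV, hV] at h
  rw [← lie_skew X (V Y), map_sub, map_neg, LinearMap.sub_apply, LinearMap.neg_apply, h,
    sub_neg_eq_add, add_neg_cancel]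

end TrilinearForm

section Quasicentroid

variable {K g : Type*} [Field K] [LieRing g] [LieAlgebra K g] {B : g →ₗ[K] g →ₗ[K] K}
  {D : g →ₗ[K] g}

theorem apply_lie_map_left_eq (hBinv : ∀ x y z : g, B ⁅x, y⁆ z + B y ⁅x, z⁆ = 0)
    (hD : ∀ x y, ⁅D x, y⁆ = ⁅x, D y⁆) (x y z : g) : B ⁅D x, y⁆ z = B ⁅x, y⁆ (D z) := by
  have h₁ := hBinv (D x) y z
  have h₂ := hBinv x y (D z)
  rw [hD x z] at h₁
  linear_combination h₁ - h₂

theorem lie_map_lie_eq (hB : B.SeparatingLeft)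
    (hBinv : ∀ x y z : g, B ⁅x, y⁆ z + B y ⁅x, z⁆ = 0) (hD : ∀ x y, ⁅D x, y⁆ = ⁅x, D y⁆)
    (x y z : g) : ⁅D ⁅x, y⁆, z⁆ = ⁅D x, ⁅y, z⁆⁆ - ⁅D y, ⁅x, z⁆⁆ := by
  refine sub_eq_zero.mp (hB _ fun w => ?_)
  simp only [map_sub, LinearMap.sub_apply, apply_lie_map_left_eq hBinv hD, lie_lie, sub_self]

theorem map_lie_eq_lie_map_left [CharZero K] (hcenter : center K g = ⊥) (hB : B.SeparatingLeft)
    (hBinv : ∀ x y z : g, B ⁅x, y⁆ z + B y ⁅x, z⁆ = 0) (hD : ∀ x y, ⁅D x, y⁆ = ⁅x, D y⁆)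
    (x y : g) : D ⁅x, y⁆ = ⁅D x, y⁆ := by
  have := IsAddTorsionFree.of_isTorsionFree K g
  rw [← sub_eq_zero, ← LieSubmodule.mem_bot (R := K) (L := g), ← hcenter,
    LieModule.mem_maxTrivSubmodule]
  intro z
  rw [← lie_skew, neg_eq_zero, sub_lie]
  have h₁ : ⁅D ⁅x, y⁆, z⁆ - ⁅⁅D x, y⁆, z⁆ = ⁅y, ⁅D x, z⁆⁆ - ⁅D y, ⁅x, z⁆⁆ := by
    rw [lie_map_lie_eq hB hBinv hD, lie_lie]; abel
  have h₂ : ⁅D ⁅x, y⁆, z⁆ - ⁅⁅D x, y⁆, z⁆ = -(⁅y, ⁅D x, z⁆⁆ - ⁅D y, ⁅x, z⁆⁆) := by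
    rw [hD, lie_lie, ← hD y, ← hD x, hD x y, lie_lie]; abel
  rw [h₁, ← self_eq_neg]
  exact h₁.symm.trans h₂

theorem isAdjointPair_self_of_lie_map_eq [CharZero K]
    (hperf : ⁅(⊤ : LieIdeal K g), (⊤ : LieIdeal K g)⁆ = ⊤) (hcenter : center K g = ⊥)
    (hB : B.SeparatingLeft)
    (hBinv : ∀ x y z : g, B ⁅x, y⁆ z + B y ⁅x, z⁆ = 0) (hD : ∀ x y, ⁅D x, y⁆ = ⁅x, D y⁆) :
    B.IsAdjointPair B D D := by
  intro u w
  have hu : u ∈ (⁅(⊤ : LieIdeal K g), (⊤ : LieIdeal K g)⁆ : LieIdeal K g).toSubmodule := by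
    rw [hperf]; exact LieSubmodule.mem_top u
  rw [LieSubmodule.lieIdeal_oper_eq_linear_span'] at hu
  induction hu using Submodule.span_induction with
  | mem _ h =>
    obtain ⟨x, -, y, -, rfl⟩ := h
    rw [map_lie_eq_lie_map_left hcenter hB hBinv hD, apply_lie_map_left_eq hBinv hD]
  | zero => simp
  | add _ _ _ _ h₁ h₂ => simp only [map_add, LinearMap.add_apply, h₁, h₂]
  | smul _ _ _ h => simp only [map_smul, LinearMap.smul_apply, h]

end Quasicentroid

namespace LieAlgebra.IsSimple

section Field

variable {K g : Type*} [Field K] [LieRing g] [LieAlgebra K g] [IsSimple K g]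

theorem lie_top_top_eq_top : ⁅(⊤ : LieIdeal K g), (⊤ : LieIdeal K g)⁆ = ⊤ :=
  lie_eq_self_of_isAtom_of_nonabelian ⊤ isAtom_top fun h =>
    non_abelian K (L := g) ((lie_abelian_iff_equiv_lie_abelian LieIdeal.topEquiv).mp h)

theorem eq_smul_of_hasEigenvalue_s4 {D : g →ₗ[K] g} (hD : ∀ x y : g, D ⁅x, y⁆ = ⁅x, D y⁆) {a : K}
    (ha : HasEigenvalue D a) : D = a • LinearMap.id := by
  let E : LieIdeal K g :=
    { toSubmodule := eigenspace D a
      lie_mem := fun {x y} hy =>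
        mem_eigenspace_iff.mpr <| by rw [hD, mem_eigenspace_iff.mp hy, lie_smul] }
  have hE : E = ⊤ := (eq_bot_or_eq_top E).resolve_left fun h =>
    ha (by rw [← LieSubmodule.toSubmodule_eq_bot] at h; exact h)
  ext x
  exact mem_eigenspace_iff.mp (show x ∈ E from hE ▸ LieSubmodule.mem_top x)

end Field

theorem exists_eq_smul_of_lie_map_eq {g : Type*} [LieRing g] [LieAlgebra ℝ g]
    [FiniteDimensional ℝ g] [IsSimple ℝ g] {B : g →ₗ[ℝ] g →ₗ[ℝ] ℝ}
    (hBsymm : ∀ x y, B x y = B y x) (hBpos : ∀ x, x ≠ 0 → 0 < B x x)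
    (hBinv : ∀ x y z : g, B ⁅x, y⁆ z + B y ⁅x, z⁆ = 0) {D : g →ₗ[ℝ] g}
    (hD : ∀ x y, ⁅D x, y⁆ = ⁅x, D y⁆) : ∃ a : ℝ, D = a • LinearMap.id := by
  have := nontrivial ℝ g
  have hB := LinearMap.separatingLeft_of_forall_pos hBpos
  have hcenter := center_eq_bot ℝ g
  obtain ⟨a, ha⟩ := exists_hasEigenvalue_of_isAdjointPair_self hBsymm hBpos
    (isAdjointPair_self_of_lie_map_eq lie_top_top_eq_top hcenter hB hBinv hD)
  refine ⟨a, eq_smul_of_hasEigenvalue_s4 (fun x y => ?_) ha⟩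
  rw [map_lie_eq_lie_map_left hcenter hB hBinv hD, hD]

end LieAlgebra.IsSimple

/-- The projections of `L = center R L ⊕ ⨁ i, I i` onto the ideals `I i`. -/
structure IsCenterIdealProjections {R L ι : Type*} [CommRing R] [LieRing L] [LieAlgebra R L]
    (I : ι → LieIdeal R L) (π : ι → L →ₗ[R] L) : Prop where
  apply_mem : ∀ i X, π i X ∈ I i
  apply_of_mem : ∀ i, ∀ X ∈ I i, π i X = X
  apply_of_mem_center : ∀ i, ∀ X ∈ center R L, π i X = 0
  apply_of_mem_of_ne : ∀ i j, i ≠ j → ∀ X ∈ I j, π i X = 0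
  sup_iSup_eq_top : (center R L).toSubmodule ⊔ ⨆ i, (I i).toSubmodule = ⊤

namespace IsCenterIdealProjections

section CommRing

variable {R L ι : Type*} [CommRing R] [LieRing L] [LieAlgebra R L]
  {I : ι → LieIdeal R L} {π : ι → L →ₗ[R] L}

theorem eq_zero_of_mem_of_mem (hπ : IsCenterIdealProjections I π) {i j : ι} (hij : i ≠ j)
    {u : L} (hi : u ∈ I i) (hj : u ∈ I j) : u = 0 :=
  (hπ.apply_of_mem i u hi).symm.trans (hπ.apply_of_mem_of_ne i j hij u hj)

variable [Fintype ι]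

theorem sum_apply_of_mem (hπ : IsCenterIdealProjections I π) {i : ι} {X : L} (hX : X ∈ I i) :
    ∑ j, π j X = X := by
  classical
  rw [Finset.sum_eq_single_of_mem i (Finset.mem_univ i) fun j _ hji =>
    hπ.apply_of_mem_of_ne j i hji X hX, hπ.apply_of_mem i X hX]

theorem sub_sum_mem_center (hπ : IsCenterIdealProjections I π) (X : L) :
    X - ∑ i, π i X ∈ center R L := by
  obtain ⟨c, hc, Y, hY, rfl⟩ :=
    Submodule.mem_sup.mp (hπ.sup_iSup_eq_top ▸ Submodule.mem_top (x := X))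
  have hsum : ∑ i, π i Y = Y := by
    induction hY using Submodule.iSup_induction' with
    | mem i Y hY => exact hπ.sum_apply_of_mem hY
    | zero => simp
    | add Y Y' _ _ h h' => simp only [map_add, Finset.sum_add_distrib, h, h']
  have hc0 : ∑ i, π i c = 0 := Finset.sum_eq_zero fun i _ => hπ.apply_of_mem_center i c hc
  simp only [map_add, Finset.sum_add_distrib, hsum, hc0, zero_add, add_sub_cancel_right]
  exact hc

theorem lie_apply_right (hπ : IsCenterIdealProjections I π) {i : ι} {a : L} (ha : a ∈ I i)
    (Y : L) : ⁅a, π i Y⁆ = ⁅a, Y⁆ := by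
  classical
  have hc : ⁅a, Y - ∑ j, π j Y⁆ = 0 :=
    (LieModule.mem_maxTrivSubmodule R L L _).mp (hπ.sub_sum_mem_center Y) a
  have hoff : ∀ j ∈ Finset.univ, j ≠ i → ⁅a, π j Y⁆ = 0 := fun j _ hji =>
    hπ.eq_zero_of_mem_of_mem hji ((I j).lie_mem (hπ.apply_mem j Y))
      (lie_mem_left R L (I i) _ _ ha)
  calc ⁅a, π i Y⁆ = ∑ j, ⁅a, π j Y⁆ :=
        (Finset.sum_eq_single_of_mem i (Finset.mem_univ i) hoff).symm
    _ = ⁅a, Y - ∑ j, π j Y⁆ + ⁅a, ∑ j, π j Y⁆ := by rw [hc, zero_add, lie_sum]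
    _ = ⁅a, Y⁆ := by rw [← lie_add, sub_add_cancel]

theorem apply_lie_left (hπ : IsCenterIdealProjections I π) {i : ι} {y : L} (hy : y ∈ I i)
    (X : L) : ⁅π i X, y⁆ = ⁅X, y⁆ := by
  rw [← lie_skew, hπ.lie_apply_right hy, lie_skew]

theorem eq_zero_of_forall_lie_eq_zero (hπ : IsCenterIdealProjections I π) {i : ι} {u : L}
    (hu : u ∈ I i) (h : ∀ y ∈ I i, ⁅u, y⁆ = 0) : u = 0 := by
  have hcenter : u ∈ center R L := (LieModule.mem_maxTrivSubmodule R L L u).mpr fun X => by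
    rw [← lie_skew, ← hπ.lie_apply_right hu, h _ (hπ.apply_mem i X), neg_zero]
  rw [← hπ.apply_of_mem i u hu, hπ.apply_of_mem_center i u hcenter]

theorem lie_eq_sum (hπ : IsCenterIdealProjections I π) (X Y : L) :
    ⁅X, Y⁆ = ∑ i, ⁅π i X, π i Y⁆ := by
  have hc : ⁅X - ∑ i, π i X, Y⁆ = 0 := by
    rw [← lie_skew, (LieModule.mem_maxTrivSubmodule R L L _).mp (hπ.sub_sum_mem_center X) Y,
      neg_zero]
  calc ⁅X, Y⁆ = ⁅X - ∑ i, π i X, Y⁆ + ⁅∑ i, π i X, Y⁆ := by rw [← add_lie, sub_add_cancel]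
    _ = ∑ i, ⁅π i X, π i Y⁆ := by
      rw [hc, zero_add, sum_lie]
      exact Finset.sum_congr rfl fun i _ => (hπ.lie_apply_right (hπ.apply_mem i X) Y).symm

theorem apply_lie (hπ : IsCenterIdealProjections I π) (i : ι) (X Y : L) :
    π i ⁅X, Y⁆ = ⁅π i X, π i Y⁆ := by
  classical
  have hmem : ∀ j, ⁅π j X, π j Y⁆ ∈ I j := fun j => (I j).lie_mem (hπ.apply_mem j Y)
  rw [hπ.lie_eq_sum, map_sum, Finset.sum_eq_single_of_mem i (Finset.mem_univ i)
    fun j _ hji => hπ.apply_of_mem_of_ne i j hji.symm _ (hmem j), hπ.apply_of_mem i _ (hmem i)]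

theorem apply_lie_apply_right {B : L →ₗ[R] L →ₗ[R] R}
    (hπ : IsCenterIdealProjections I π) (hBinv : ∀ x y z : L, B ⁅x, y⁆ z + B y ⁅x, z⁆ = 0)
    {i : ι} {a : L} (ha : a ∈ I i) (b Z : L) : B ⁅a, b⁆ (π i Z) = B ⁅a, b⁆ Z := by
  linear_combination hBinv a b (π i Z) - hBinv a b Z - congrArg (B b) (hπ.lie_apply_right ha Z)

theorem apply_lie_sum_smul {B : L →ₗ[R] L →ₗ[R] R}
    (hπ : IsCenterIdealProjections I π) (hBinv : ∀ x y z : L, B ⁅x, y⁆ z + B y ⁅x, z⁆ = 0)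
    (α : ι → R) (X Y Z : L) :
    B ⁅∑ i, α i • π i X, Y⁆ Z = ∑ i, α i * B ⁅π i X, π i Y⁆ (π i Z) := by
  simp only [sum_lie, smul_lie, map_sum, map_smul, LinearMap.sum_apply,
    LinearMap.smul_apply, smul_eq_mul]
  refine Finset.sum_congr rfl fun i _ => ?_
  rw [hπ.lie_apply_right (hπ.apply_mem i X), hπ.apply_lie_apply_right hBinv (hπ.apply_mem i X)]

end CommRing

section Real

variable {L ι : Type*} [LieRing L] [LieAlgebra ℝ L] [FiniteDimensional ℝ L] [Fintype ι]
  {I : ι → LieIdeal ℝ L} {π : ι → L →ₗ[ℝ] L} {B : L →ₗ[ℝ] L →ₗ[ℝ] ℝ}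

theorem exists_apply_map_eq_smul (hπ : IsCenterIdealProjections I π)
    (hBsymm : ∀ x y, B x y = B y x) (hBpos : ∀ x, x ≠ 0 → 0 < B x x)
    (hBinv : ∀ x y z : L, B ⁅x, y⁆ z + B y ⁅x, z⁆ = 0) (i : ι) [IsSimple ℝ (I i)]
    {V : L →ₗ[ℝ] L} (hV : ∀ X Y, ⁅V X, Y⁆ = ⁅X, V Y⁆) :
    ∃ a : ℝ, ∀ X, π i (V X) = a • π i X := by
  let D : I i →ₗ[ℝ] I i := (π i ∘ₗ V).restrict fun x _ => hπ.apply_mem i (V x)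
  have hD : ∀ x y : I i, ⁅D x, y⁆ = ⁅x, D y⁆ := fun x y => Subtype.ext <| by
    show ⁅π i (V x), (y : L)⁆ = ⁅(x : L), π i (V y)⁆
    rw [hπ.apply_lie_left y.2, hV, hπ.lie_apply_right x.2]
  obtain ⟨a, ha⟩ := IsSimple.exists_eq_smul_of_lie_map_eq (g := I i)
    (B := B.compl₁₂ ((I i).incl : I i →ₗ[ℝ] L) (I i).incl) (fun x y => hBsymm x y)
    (fun x hx => hBpos x (by simpa using hx)) (fun x y z => hBinv x y z) hD
  have hmem : ∀ x ∈ I i, π i (V x) = a • x := fun x hx =>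
    congrArg Subtype.val (LinearMap.congr_fun ha ⟨x, hx⟩)
  refine ⟨a, fun X => sub_eq_zero.mp (hπ.eq_zero_of_forall_lie_eq_zero
    (sub_mem (hπ.apply_mem i _) (Submodule.smul_mem _ _ (hπ.apply_mem i X))) fun y hy => ?_)⟩
  have hXy : ⁅X, V y⁆ ∈ I i := hV X y ▸ (I i).lie_mem hy
  rw [sub_lie, smul_lie, hπ.apply_lie_left hy, hV, ← hπ.apply_of_mem i _ hXy, hπ.apply_lie,
    hmem y hy, lie_smul, sub_self]

theorem exists_sub_sum_smul_mem_center (hπ : IsCenterIdealProjections I π)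
    (hBsymm : ∀ x y, B x y = B y x) (hBpos : ∀ x, x ≠ 0 → 0 < B x x)
    (hBinv : ∀ x y z : L, B ⁅x, y⁆ z + B y ⁅x, z⁆ = 0) (hsimple : ∀ i, IsSimple ℝ (I i))
    {V : L →ₗ[ℝ] L} (hV : ∀ X Y, ⁅V X, Y⁆ = ⁅X, V Y⁆) :
    ∃ α : ι → ℝ, ∀ X, V X - ∑ i, α i • π i X ∈ center ℝ L := by
  choose α hα using fun i =>
    have := hsimple i
    hπ.exists_apply_map_eq_smul hBsymm hBpos hBinv i hV
  refine ⟨α, fun X => ?_⟩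
  simpa only [hα] using hπ.sub_sum_mem_center (V X)

end Real

end IsCenterIdealProjections

/-- Let `𝔤 = 𝔷 ⊕ 𝔤₁ ⊕ … ⊕ 𝔤_q` be a finite-dimensional real Lie algebra
with ad-invariant inner product `B`, where `𝔷` is the center and the `𝔤ᵢ` are simple ideals,
with projections `π i`.  An alternating trilinear form `T` has all its contractions of the
form `B([V,·],·)` iff it is a linear combination of the Cartan 3-forms of the simple ideals. -/
theorem compact_lie_characteristic_torsion (L : Type) [LieRing L] [LieAlgebra ℝ L]
    [FiniteDimensional ℝ L]
    (B : L →ₗ[ℝ] L →ₗ[ℝ] ℝ)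
    (hBsymm : ∀ X Y : L, B X Y = B Y X)
    (hBpos : ∀ X : L, X ≠ 0 → 0 < B X X)
    (hBinv : ∀ X Y Z : L, B ⁅X, Y⁆ Z + B Y ⁅X, Z⁆ = 0)
    (q : ℕ) (I : Fin q → LieIdeal ℝ L)
    (hsimple : ∀ i, LieAlgebra.IsSimple ℝ (I i))
    (hdecomp : DirectSum.IsInternal fun o : Option (Fin q) =>
      o.elim (LieAlgebra.center ℝ L).toSubmodule fun i => (I i).toSubmodule)
    (π : Fin q → (L →ₗ[ℝ] L))
    (hπmem : ∀ (i : Fin q) (X : L), π i X ∈ I i)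
    (hπid : ∀ i : Fin q, ∀ X ∈ I i, π i X = X)
    (hπcenter : ∀ i : Fin q, ∀ X ∈ LieAlgebra.center ℝ L, π i X = 0)
    (hπoff : ∀ i j : Fin q, i ≠ j → ∀ X ∈ I j, π i X = 0)
    (T : L [⋀^Fin 3]→ₗ[ℝ] ℝ) :
    (∀ X : L, ∃ V : L, ∀ Y Z : L, T ![X, Y, Z] = B ⁅V, Y⁆ Z) ↔
      ∃ α : Fin q → ℝ, ∀ X Y Z : L,
        T ![X, Y, Z] = ∑ i, α i * B ⁅π i X, π i Y⁆ (π i Z) := by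
  have hπ : IsCenterIdealProjections I π := ⟨hπmem, hπid, hπcenter, hπoff, by
    rw [← hdecomp.submodule_iSup_eq_top, iSup_option]; rfl⟩
  constructor
  · intro h
    obtain ⟨V, hV⟩ := exists_linearMap_apply_eq_lie h
    obtain ⟨α, hα⟩ := hπ.exists_sub_sum_smul_mem_center hBsymm hBpos hBinv hsimple
      (lie_map_eq_of_alternating (LinearMap.separatingLeft_of_forall_pos hBpos) hV)
    refine ⟨α, fun X Y Z => ?_⟩
    have hcentral : ⁅V X - ∑ i, α i • π i X, Y⁆ = 0 := by
      rw [← lie_skew, (LieModule.mem_maxTrivSubmodule ℝ L L _).mp (hα X) Y, neg_zero]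
    rw [hV, ← hπ.apply_lie_sum_smul hBinv, ← sub_add_cancel (V X) (∑ i, α i • π i X), add_lie,
      hcentral, zero_add]
  · rintro ⟨α, hα⟩ X
    exact ⟨∑ i, α i • π i X, fun Y Z => by rw [hα, hπ.apply_lie_sum_smul hBinv]⟩
end

section
/- Let n ≥ 3 and α ∈ ℝ with α ≠ 0, define η(X,Y) := iα·(XY + YX − (2/n)·tr(XY)·Iₙ) for X,Y ∈ 𝔰𝔲(n), and define the ad-invariant inner product g(X,Y) := −2n·Re(tr(XY)) on 𝔰𝔲(n). Then there exist X, Y, Z ∈ 𝔰𝔲(n) with g(η(X,Y), Z) + g(Y, η(X,Z)) ≠ 0; that is, the bilinear map η does not define a metric connection with respect to the biinvariant metric on SU(n). -/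
open Matrix

/-- The special unitary Lie algebra `𝔰𝔲(n)`: traceless anti-hermitian matrices. -/
def suSet (n : ℕ) : Set (Matrix (Fin n) (Fin n) ℂ) :=
  {X | Xᴴ = -X ∧ X.trace = 0}

/-- Laquer's symmetric map `η(X,Y) = iα(XY + YX - (2/n) tr(XY)·1)` on `𝔰𝔲(n)`. -/
noncomputable def etaMap (n : ℕ) (α : ℝ) (X Y : Matrix (Fin n) (Fin n) ℂ) :
    Matrix (Fin n) (Fin n) ℂ :=
  (Complex.I * (α : ℂ)) • (X * Y + Y * X - ((2 / (n : ℂ)) * (X * Y).trace) • (1 : Matrix (Fin n) (Fin n) ℂ))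

/-- The biinvariant metric `g(X,Y) = -2n·Re(tr(XY))` on `𝔰𝔲(n)`. -/
noncomputable def gMetric (n : ℕ) (X Y : Matrix (Fin n) (Fin n) ℂ) : ℝ :=
  -2 * (n : ℝ) * ((X * Y).trace).re

/-!
Take `X = Y = Z`. Since `g` is symmetric, the defect is `2 g(η(X,X), X)`, and for traceless `X`
this equals `8nα · Im tr(X³)`. For `X = i·diag(d)` with `d` real this is `-8nα ∑ dᵢ³`, so it
suffices to find a real vector with `∑ dᵢ = 0` and `∑ dᵢ³ ≠ 0`, e.g. `d = (1, 1, -2, 0, …, 0)`.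
-/

theorem gMetric_comm (n : ℕ) (X Y : Matrix (Fin n) (Fin n) ℂ) :
    gMetric n X Y = gMetric n Y X := by
  rw [gMetric, gMetric, trace_mul_comm]

theorem gMetric_etaMap_self_self (n : ℕ) (α : ℝ) {X : Matrix (Fin n) (Fin n) ℂ}
    (hX : X.trace = 0) :
    gMetric n (etaMap n α X X) X = 4 * n * α * (X * X * X).trace.im := by
  have htrace :
      (etaMap n α X X * X).trace = ((2 * α : ℝ) : ℂ) * (Complex.I * (X * X * X).trace) := by
    simp only [etaMap, smul_mul, sub_mul, add_mul, one_mul, trace_smul, trace_sub, trace_add, hX,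
      smul_eq_mul, mul_zero, sub_zero]
    push_cast
    ring
  rw [gMetric, htrace, Complex.re_ofReal_mul, Complex.I_mul_re]
  ring

theorem diagonal_I_mul_mem_suSet {n : ℕ} {d : Fin n → ℝ} (hd : ∑ i, d i = 0) :
    diagonal (fun i => Complex.I * d i) ∈ suSet n := by
  refine ⟨?_, ?_⟩
  · rw [diagonal_conjTranspose, diagonal_neg]
    congr 1
    ext i
    simp
  · simp [trace_diagonal, ← Finset.mul_sum, ← Complex.ofReal_sum, hd]

theorem im_trace_diagonal_I_mul_cube {n : ℕ} (d : Fin n → ℝ) :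
    (diagonal (fun i => Complex.I * d i) * diagonal (fun i => Complex.I * d i) *
      diagonal (fun i => Complex.I * d i)).trace.im = -∑ i, d i ^ 3 := by
  simp only [diagonal_mul_diagonal, trace_diagonal, Complex.im_sum, ← Finset.sum_neg_distrib]
  refine Finset.sum_congr rfl fun i _ => ?_
  have hcube :
      Complex.I * d i * (Complex.I * d i) * (Complex.I * d i) = (-(d i ^ 3) : ℝ) * Complex.I := by
    push_cast
    linear_combination ((d i : ℂ) ^ 3 * Complex.I) * Complex.I_sq
  rw [hcube, Complex.im_ofReal_mul, Complex.I_im, mul_one]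

theorem exists_sum_eq_zero_sum_cube_ne_zero {n : ℕ} (hn : 3 ≤ n) :
    ∃ d : Fin n → ℝ, ∑ i, d i = 0 ∧ ∑ i, d i ^ 3 ≠ 0 := by
  obtain ⟨m, rfl⟩ := Nat.exists_eq_add_of_le' hn
  refine ⟨Fin.cons 1 (Fin.cons 1 (Fin.cons (-2) 0)), ?_, ?_⟩ <;>
    simp [Fin.sum_univ_succ] <;> norm_num

/-- For `n ≥ 3` and `α ≠ 0`, the biinvariant connection defined by `η`
is not metric: the total skew-symmetry fails for some `X, Y, Z ∈ 𝔰𝔲(n)`. -/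
theorem eta_not_metric (n : ℕ) (hn : 3 ≤ n) (α : ℝ) (hα : α ≠ 0) :
    ∃ X Y Z : Matrix (Fin n) (Fin n) ℂ, X ∈ suSet n ∧ Y ∈ suSet n ∧ Z ∈ suSet n ∧
      gMetric n (etaMap n α X Y) Z + gMetric n Y (etaMap n α X Z) ≠ 0 := by
  obtain ⟨d, hd_sum, hd_cube⟩ := exists_sum_eq_zero_sum_cube_ne_zero hn
  have hX := diagonal_I_mul_mem_suSet hd_sum
  refine ⟨_, _, _, hX, hX, hX, ?_⟩
  rw [gMetric_comm n _ (etaMap _ _ _ _), gMetric_etaMap_self_self n α hX.2,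
    im_trace_diagonal_I_mul_cube, ← two_mul]
  have hn0 : (n : ℝ) ≠ 0 := by exact_mod_cast (by omega : n ≠ 0)
  simp [hn0, hα, hd_cube]
end

section
/- Let n ≥ 2 and define ν(X,Y) := i·(X·tr(Y) − Y·tr(X)) for X,Y ∈ 𝔲(n). Then: (i) ν(X,Y) ∈ 𝔲(n) for all X,Y ∈ 𝔲(n); (ii) ν is antisymmetric and ℝ-bilinear; (iii) ν is Ad U(n)-equivariant: for every unitary g ∈ U(n), ν(gXg⁻¹, gYg⁻¹) = g·ν(X,Y)·g⁻¹; and (iv) for every inner product B on 𝔲(n) satisfying B([X,Y],Z) + B(Y,[X,Z]) = 0 for all X,Y,Z, there exist X, Y ∈ 𝔲(n) with B(ν(X,Y), Y) ≠ 0; that is, ν does not define a metric connection for any biinvariant metric on U(n). -/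
open Matrix

/-- The unitary Lie algebra `𝔲(n)`: anti-hermitian matrices. -/
def unSet (n : ℕ) : Set (Matrix (Fin n) (Fin n) ℂ) :=
  {X | Xᴴ = -X}

/-- Laquer's antisymmetric map `ν(X,Y) = i(X·tr(Y) - Y·tr(X))` on `𝔲(n)`. -/
noncomputable def nuMap (n : ℕ) (X Y : Matrix (Fin n) (Fin n) ℂ) : Matrix (Fin n) (Fin n) ℂ :=
  Complex.I • (Y.trace • X - X.trace • Y)

/-!
Since conjugation preserves traces, `ν` is equivariant. For the last claim take the central
element `X = i·1` and a nonzero traceless `Y ∈ 𝔲(n)`, which exists once `n ≥ 2`: then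
`ν(X, Y) = -i·tr(X)·Y = n·Y`, so `B(ν(X, Y), Y) = n·B(Y, Y) > 0` for every inner product `B`.
-/

section

variable {n : ℕ}

theorem star_trace_of_mem_unSet {X : Matrix (Fin n) (Fin n) ℂ} (hX : X ∈ unSet n) :
    star X.trace = -X.trace := by
  rw [← trace_conjTranspose, show Xᴴ = -X from hX, trace_neg]

theorem nuMap_mem_unSet {X Y : Matrix (Fin n) (Fin n) ℂ} (hX : X ∈ unSet n)
    (hY : Y ∈ unSet n) : nuMap n X Y ∈ unSet n := by
  change (nuMap n X Y)ᴴ = -nuMap n X Y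
  simp only [nuMap, conjTranspose_smul, conjTranspose_sub, show Xᴴ = -X from hX,
    show Yᴴ = -Y from hY, star_trace_of_mem_unSet hX, star_trace_of_mem_unSet hY,
    Complex.star_def, Complex.conj_I, neg_smul, smul_neg, neg_neg]

theorem nuMap_swap (X Y : Matrix (Fin n) (Fin n) ℂ) : nuMap n X Y = -nuMap n Y X := by
  rw [nuMap, nuMap, ← smul_neg, neg_sub]

theorem nuMap_add_left (X X' Y : Matrix (Fin n) (Fin n) ℂ) :
    nuMap n (X + X') Y = nuMap n X Y + nuMap n X' Y := by
  simp only [nuMap, trace_add, add_smul, smul_add, smul_sub]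
  abel

theorem nuMap_smul_left (c : ℂ) (X Y : Matrix (Fin n) (Fin n) ℂ) :
    nuMap n (c • X) Y = c • nuMap n X Y := by
  simp only [nuMap, trace_smul, smul_eq_mul, smul_sub, smul_smul, mul_comm, mul_left_comm]

theorem nuMap_real_smul_left (r : ℝ) (X Y : Matrix (Fin n) (Fin n) ℂ) :
    nuMap n (r • X) Y = r • nuMap n X Y := by
  simp only [RCLike.real_smul_eq_coe_smul (K := ℂ), nuMap_smul_left]

theorem nuMap_add_right (X Y Y' : Matrix (Fin n) (Fin n) ℂ) :
    nuMap n X (Y + Y') = nuMap n X Y + nuMap n X Y' := by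
  rw [nuMap_swap, nuMap_add_left, neg_add, ← nuMap_swap, ← nuMap_swap]

theorem nuMap_real_smul_right (r : ℝ) (X Y : Matrix (Fin n) (Fin n) ℂ) :
    nuMap n X (r • Y) = r • nuMap n X Y := by
  rw [nuMap_swap, nuMap_real_smul_left, ← smul_neg, ← nuMap_swap]

theorem nuMap_conj {g h : Matrix (Fin n) (Fin n) ℂ} (hg : h * g = 1)
    (X Y : Matrix (Fin n) (Fin n) ℂ) : nuMap n (g * X * h) (g * Y * h) = g * nuMap n X Y * h := by
  have trace_conj (Z : Matrix (Fin n) (Fin n) ℂ) : (g * Z * h).trace = Z.trace := by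
    rw [trace_mul_cycle, hg, one_mul]
  simp only [nuMap, trace_conj, mul_sub, sub_mul, mul_smul_comm, smul_mul_assoc]

theorem nuMap_conj_unitary {g : Matrix (Fin n) (Fin n) ℂ} (hg : gᴴ * g = 1)
    (X Y : Matrix (Fin n) (Fin n) ℂ) :
    nuMap n (g * X * g⁻¹) (g * Y * g⁻¹) = g * nuMap n X Y * g⁻¹ := by
  rw [inv_eq_left_inv hg]
  exact nuMap_conj hg X Y

theorem nuMap_of_trace_eq_zero {X Y : Matrix (Fin n) (Fin n) ℂ} (hY : Y.trace = 0) :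
    nuMap n X Y = -(Complex.I * X.trace) • Y := by
  rw [nuMap, hY, zero_smul, zero_sub, smul_neg, smul_smul, neg_smul]

theorem nuMap_I_smul_one {Y : Matrix (Fin n) (Fin n) ℂ} (hY : Y.trace = 0) :
    nuMap n (Complex.I • 1) Y = (n : ℝ) • Y := by
  rw [nuMap_of_trace_eq_zero hY, trace_smul, trace_one, smul_eq_mul, ← mul_assoc,
    Complex.I_mul_I, Fintype.card_fin, RCLike.real_smul_eq_coe_smul (K := ℂ)]
  simp

theorem I_smul_one_mem_unSet : Complex.I • (1 : Matrix (Fin n) (Fin n) ℂ) ∈ unSet n := by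
  change (Complex.I • (1 : Matrix (Fin n) (Fin n) ℂ))ᴴ = _
  simp [conjTranspose_smul, Complex.conj_I]

theorem exists_mem_unSet_trace_eq_zero_ne_zero (hn : 2 ≤ n) :
    ∃ Y ∈ unSet n, Y.trace = 0 ∧ Y ≠ 0 := by
  let i : Fin n := ⟨0, by omega⟩
  let j : Fin n := ⟨1, by omega⟩
  have hij : i ≠ j := by simp [i, j, Fin.ext_iff]
  refine ⟨single i j 1 - single j i 1, ?_, ?_, ?_⟩
  · change (single i j 1 - single j i 1)ᴴ = -(single i j 1 - single j i (1 : ℂ))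
    rw [conjTranspose_sub, conjTranspose_single, conjTranspose_single, star_one, neg_sub]
  · rw [trace_sub, trace_single_eq_of_ne _ _ _ hij, trace_single_eq_of_ne _ _ _ hij.symm,
      sub_zero]
  · intro h
    have := congrFun (congrFun h i) j
    simp [single_apply_of_ne _ _ _ _ _ (fun h : j = i ∧ i = j => hij h.2)] at this

end

/-- `ν` maps `𝔲(n) × 𝔲(n)` to `𝔲(n)`, is antisymmetric and `ℝ`-bilinear,
is `Ad U(n)`-equivariant, and does not define a metric connection for any biinvariant
metric on `U(n)`. -/
theorem nu_equivariant_not_metric (n : ℕ) (hn : 2 ≤ n) :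
    -- (i) ν takes values in 𝔲(n)
    (∀ X ∈ unSet n, ∀ Y ∈ unSet n, nuMap n X Y ∈ unSet n) ∧
    -- (ii) ν is antisymmetric and ℝ-bilinear
    (∀ X Y : Matrix (Fin n) (Fin n) ℂ, nuMap n X Y = -nuMap n Y X) ∧
    (∀ X X' Y : Matrix (Fin n) (Fin n) ℂ,
      nuMap n (X + X') Y = nuMap n X Y + nuMap n X' Y) ∧
    (∀ (r : ℝ) (X Y : Matrix (Fin n) (Fin n) ℂ), nuMap n (r • X) Y = r • nuMap n X Y) ∧
    (∀ X Y Y' : Matrix (Fin n) (Fin n) ℂ,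
      nuMap n X (Y + Y') = nuMap n X Y + nuMap n X Y') ∧
    (∀ (r : ℝ) (X Y : Matrix (Fin n) (Fin n) ℂ), nuMap n X (r • Y) = r • nuMap n X Y) ∧
    -- (iii) Ad U(n)-equivariance
    (∀ g : Matrix (Fin n) (Fin n) ℂ, gᴴ * g = 1 →
      ∀ X ∈ unSet n, ∀ Y ∈ unSet n,
        nuMap n (g * X * g⁻¹) (g * Y * g⁻¹) = g * nuMap n X Y * g⁻¹) ∧
    -- (iv) ν is not metric for any ad-invariant inner product on 𝔲(n)
    (∀ B : Matrix (Fin n) (Fin n) ℂ → Matrix (Fin n) (Fin n) ℂ → ℝ,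
      (∀ X X' Y, B (X + X') Y = B X Y + B X' Y) →
      (∀ (r : ℝ) X Y, B (r • X) Y = r * B X Y) →
      (∀ X Y Y', B X (Y + Y') = B X Y + B X Y') →
      (∀ (r : ℝ) X Y, B X (r • Y) = r * B X Y) →
      (∀ X ∈ unSet n, ∀ Y ∈ unSet n, B X Y = B Y X) →
      (∀ X ∈ unSet n, X ≠ 0 → 0 < B X X) →
      (∀ X ∈ unSet n, ∀ Y ∈ unSet n, ∀ Z ∈ unSet n, B ⁅X, Y⁆ Z + B Y ⁅X, Z⁆ = 0) →
      ∃ X ∈ unSet n, ∃ Y ∈ unSet n, B (nuMap n X Y) Y ≠ 0) := by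
  refine ⟨fun X hX Y hY => nuMap_mem_unSet hX hY, nuMap_swap, nuMap_add_left,
    nuMap_real_smul_left, nuMap_add_right, nuMap_real_smul_right,
    fun g hg X _ Y _ => nuMap_conj_unitary hg X Y, ?_⟩
  intro B _ hB_smul _ _ _ hB_pos _
  obtain ⟨Y, hY, hY_trace, hY_ne⟩ := exists_mem_unSet_trace_eq_zero_ne_zero hn
  refine ⟨Complex.I • 1, I_smul_one_mem_unSet, Y, hY, ?_⟩
  rw [nuMap_I_smul_one hY_trace, hB_smul]
  exact (mul_pos (Nat.cast_pos.mpr (by omega)) (hB_pos Y hY hY_ne)).ne'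
end
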